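/- Let P be a partition of [n+1] and let y = (y₁,…,y_n) ∈ ν_P satisfy π_P(y) ∉ E_P. Set y₀ = (−1+ρc₀/2)u and y_{n+1} = (1−ρc_{n+1}/2)u. Then: (i) for every 1 ≤ k ≤ n, the first coordinate (y_k)₁ satisfies −1+ρc_{≤{k}}−2ε_P < (y_k)₁ < 1−ρc_{≥{k}}+2ε_P; and (ii) for every piece α of P and all i, j ∈ α with i < j (where i, j range over 0,…,n+1), one has ρc_{\{i\}\{j\}}−2ε_P < (y_j)₁−(y_i)₁ < ρc_{\{i\}\{j\}}+2ε_P. In particular, if (y_j)₁ ≤ (y_i)₁ for some i < j in a common piece of P, then y ∉ ν_P or π_P(y) ∈ E_P. -/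

import Mathlib

open scoped BigOperators
open Finset

noncomputable section

namespace SinhaKnots

attribute [local instance] Classical.propDecidable

/-- `ℝ^d` with the Euclidean norm. -/
abbrev Rd (d : ℕ) := EuclideanSpace ℝ (Fin d)

/-- `(ℝ^d)^m` with the Euclidean norm. -/
abbrev Vec (m d : ℕ) := PiLp 2 (fun _ : Fin m => Rd d)

/-- The first standard basis vector `u = (1,0,…,0)` of `ℝ^d`. -/
def uVec (d : ℕ) : Rd d := if h : 0 < d then EuclideanSpace.single ⟨0, h⟩ 1 else 0

/-- The second standard basis vector `v = (0,1,0,…,0)` of `ℝ^d`. -/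
def vVec (d : ℕ) : Rd d := if h : 1 < d then EuclideanSpace.single ⟨1, h⟩ 1 else 0

/-- The first coordinate of a vector of `ℝ^d`. -/
def fst {d : ℕ} (x : Rd d) : ℝ := if h : 0 < d then x ⟨0, h⟩ else 0

/-- A partition of `[n+1] = {0,1,…,n+1}` into (at least two) nonempty consecutive intervals,
encoded as a monotone surjection onto `Fin (p+2)`; the pieces are the fibers, totally
ordered via the index, and `p` is the number of non-extremal pieces. -/
structure IntervalPartition (n : ℕ) where
  p : ℕ
  toFun : Fin (n + 2) → Fin (p + 2)
  mono : Monotone toFun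
  surj : Function.Surjective toFun

/-- `Q` is a subdivision of `P`: every piece of `Q` is contained in a piece of `P`,
and `Q ≠ P` (equivalently, `Q` has strictly more pieces). -/
def Subdivides {n : ℕ} (Q P : IntervalPartition n) : Prop :=
  (∀ i j, Q.toFun i = Q.toFun j → P.toFun i = P.toFun j) ∧ P.p < Q.p

/-- The element `i+1` of `[n+1]`, corresponding to the `i`-th component of `(ℝ^d)^n`. -/
def elt (n : ℕ) (i : Fin n) : Fin (n + 2) := ⟨(i : ℕ) + 1, by omega⟩

/-- The finest partition of `[n+1]`, into singletons. -/
def finest (n : ℕ) : IntervalPartition n :=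
  ⟨n, id, monotone_id, Function.surjective_id⟩

variable {n : ℕ}

/-- The piece of `P` with index `a`, as a finite set of elements of `[n+1]`. -/
def fiber (P : IntervalPartition n) (a : Fin (P.p + 2)) : Finset (Fin (n + 2)) :=
  Finset.univ.filter fun i => P.toFun i = a

lemma fiber_nonempty (P : IntervalPartition n) (a : Fin (P.p + 2)) : (fiber P a).Nonempty := by
  obtain ⟨i, hi⟩ := P.surj a
  exact ⟨i, by simp [fiber, hi]⟩

/-- The minimal element of a piece. -/
def minElt (P : IntervalPartition n) (a : Fin (P.p + 2)) : Fin (n + 2) :=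
  (fiber P a).min' (fiber_nonempty P a)

/-- The maximal element of a piece. -/
def maxElt (P : IntervalPartition n) (a : Fin (P.p + 2)) : Fin (n + 2) :=
  (fiber P a).max' (fiber_nonempty P a)

/-- `c_α = ∑_{i ∈ α} c_i`. -/
def cPiece (c : Fin (n + 2) → ℝ) (P : IntervalPartition n) (a : Fin (P.p + 2)) : ℝ :=
  ∑ i ∈ fiber P a, c i

/-- `c_{≤α} = ∑_{γ < α} c_γ + c_α/2`. -/
def cLE (c : Fin (n + 2) → ℝ) (P : IntervalPartition n) (a : Fin (P.p + 2)) : ℝ :=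
  (∑ i ∈ Finset.univ.filter fun i => P.toFun i < a, c i) + cPiece c P a / 2

/-- `c_{≥α} = ∑_{γ > α} c_γ + c_α/2`. -/
def cGE (c : Fin (n + 2) → ℝ) (P : IntervalPartition n) (a : Fin (P.p + 2)) : ℝ :=
  (∑ i ∈ Finset.univ.filter fun i => a < P.toFun i, c i) + cPiece c P a / 2

/-- `c_{αβ} = ∑_{α < γ < β} c_γ + (c_α + c_β)/2`. -/
def cBetween (c : Fin (n + 2) → ℝ) (P : IntervalPartition n) (a b : Fin (P.p + 2)) : ℝ :=
  (∑ i ∈ Finset.univ.filter fun i => a < P.toFun i ∧ P.toFun i < b, c i)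
    + (cPiece c P a + cPiece c P b) / 2

/-- The tuple `x` indexed by the non-extremal pieces, extended to all pieces by the fixed
values `x₀ = (-1+ρc_{α₀}/2)u` and `x_{p+1} = (1-ρc_{α_{p+1}}/2)u` on the extremal pieces. -/
def extTuple (ρ : ℝ) (c : Fin (n + 2) → ℝ) (P : IntervalPartition n) {d : ℕ}
    (x : Vec P.p d) : Fin (P.p + 2) → Rd d := fun a =>
  if _h0 : (a : ℕ) = 0 then (-1 + ρ * cPiece c P 0 / 2) • uVec d
  else if _h1 : (a : ℕ) = P.p + 1 then
    (1 - ρ * cPiece c P (Fin.last (P.p + 1)) / 2) • uVec d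
  else x ⟨(a : ℕ) - 1, by have := a.isLt; omega⟩

/-- The displacement (along `u`) of the center of the subsegment corresponding to the
`Q`-piece of `i` inside the segment of the `P`-piece of `i`, for a refinement `Q` of `P`. -/
def offsetQ (ρ : ℝ) (c : Fin (n + 2) → ℝ) (P Q : IntervalPartition n) (i : Fin (n + 2)) : ℝ :=
  ρ * (- cPiece c P (P.toFun i) / 2
    + (∑ j ∈ Finset.univ.filter fun j => P.toFun j = P.toFun i ∧ Q.toFun j < Q.toFun i, c j)
    + cPiece c Q (Q.toFun i) / 2)

/-- The affine injection `e_{P,Q} : (ℝ^d)^p → (ℝ^d)^q` for a refinement `Q` of `P`. -/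
def eMap (ρ : ℝ) (c : Fin (n + 2) → ℝ) (P Q : IntervalPartition n) {d : ℕ}
    (x : Vec P.p d) : Vec Q.p d := WithLp.toLp 2 fun b =>
  extTuple ρ c P x (P.toFun (minElt Q (elt Q.p b)))
    + offsetQ ρ c P Q (minElt Q (elt Q.p b)) • uVec d

/-- The affine injection `e_P : (ℝ^d)^p → (ℝ^d)^n`. -/
def ePt (ρ : ℝ) (c : Fin (n + 2) → ℝ) (P : IntervalPartition n) {d : ℕ}
    (x : Vec P.p d) : Vec n d :=
  eMap ρ c P (finest n) x

/-- `ε_P = ε/8^{n-p}`. -/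
def epsP (ε : ℝ) (P : IntervalPartition n) : ℝ := ε / 8 ^ (n - P.p)

/-- The open `ε_P`-neighborhood `ν_P` of `e_P((ℝ^d)^p)` in `(ℝ^d)^n`. -/
def nuP (ρ ε : ℝ) (c : Fin (n + 2) → ℝ) (P : IntervalPartition n) (d : ℕ) : Set (Vec n d) :=
  {y | ∃ x : Vec P.p d, ‖y - ePt ρ c P x‖ < epsP ε P}

/-- The orthogonal projection `π_P : (ℝ^d)^n → (ℝ^d)^p`, i.e. the unique minimizer of
`x ↦ |y - e_P(x)|`; explicitly, its `α`-component is the average of `y_i - o_i u` over the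
elements `i` of the piece `α`, where `o_i` is the offset of `i` in `e_P`. -/
def projP (ρ : ℝ) (c : Fin (n + 2) → ℝ) (P : IntervalPartition n) {d : ℕ}
    (y : Vec n d) : Vec P.p d := WithLp.toLp 2 fun a =>
  ((Finset.univ.filter fun i : Fin n => P.toFun (elt n i) = elt P.p a).card : ℝ)⁻¹ •
    ∑ i ∈ Finset.univ.filter fun i : Fin n => P.toFun (elt n i) = elt P.p a,
      (y i - offsetQ ρ c P (finest n) (elt n i) • uVec d)

/-- The component of a tuple `x ∈ (ℝ^d)^m` at a non-extremal vertex index `w` (and `0` at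
the extremal indices, where there is no component). -/
def comp {m d : ℕ} (x : Vec m d) (w : Fin (m + 2)) : Rd d :=
  if h : 0 < (w : ℕ) ∧ (w : ℕ) < m + 1 then x ⟨(w : ℕ) - 1, by omega⟩ else 0

/-- `d_{αβ}(P) = ρ c_{αβ} - ε_P`. -/
def dBound (ρ ε : ℝ) (c : Fin (n + 2) → ℝ) (P : IntervalPartition n)
    (a b : Fin (P.p + 2)) : ℝ :=
  ρ * cBetween c P a b - epsP ε P

/-- `D_{αβ} = {x : |x_α - x_β| ≤ d_{αβ}(P)}`. -/
def Dset (ρ ε : ℝ) (c : Fin (n + 2) → ℝ) (P : IntervalPartition n) (d : ℕ)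
    (a b : Fin (P.p + 2)) : Set (Vec P.p d) :=
  {x | ‖comp x a - comp x b‖ ≤ dBound ρ ε c P a b}

/-- `E_α`. -/
def Eset (ρ ε : ℝ) (c : Fin (n + 2) → ℝ) (P : IntervalPartition n) (d : ℕ)
    (a : Fin (P.p + 2)) : Set (Vec P.p d) :=
  {x | 1 - ρ * cPiece c P a / 2 + epsP ε P ≤ ‖comp x a‖
    ∨ fst (comp x a) ≤ -1 + ρ * cLE c P a - epsP ε P
    ∨ 1 - ρ * cGE c P a + epsP ε P ≤ fst (comp x a)}

/-- `E_P = ⋃_α E_α` over the non-extremal pieces `α`. -/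
def EsetP (ρ ε : ℝ) (c : Fin (n + 2) → ℝ) (P : IntervalPartition n) (d : ℕ) :
    Set (Vec P.p d) :=
  ⋃ a ∈ {a : Fin (P.p + 2) | 0 < (a : ℕ) ∧ (a : ℕ) < P.p + 1}, Eset ρ ε c P d a

/-- The configuration space `E(P) ⊂ (ℝ^d)^p`. -/
def Econf (ρ : ℝ) (c : Fin (n + 2) → ℝ) (P : IntervalPartition n) (d : ℕ) :
    Set (Vec P.p d) :=
  {x | (∀ w : Fin (P.p + 2), 0 < (w : ℕ) → (w : ℕ) < P.p + 1 →
          ‖comp x w‖ ≤ 1 - ρ * cPiece c P w / 2 ∧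
          -1 + ρ * cLE c P w ≤ fst (comp x w) ∧
          fst (comp x w) ≤ 1 - ρ * cGE c P w) ∧
       ∀ w w' : Fin (P.p + 2), 0 < (w : ℕ) → (w' : ℕ) < P.p + 1 → w < w' →
          ρ * cBetween c P w w' ≤ ‖comp x w - comp x w'‖}

/-! ### Graphs -/

/-- A graph on a partition with `m` non-extremal pieces: a finite set of edges, each being a
pair of vertices (vertices are the pieces, i.e. elements of `Fin (m+2)`). -/
abbrev GraphOn (m : ℕ) := Finset (Fin (m + 2) × Fin (m + 2))

/-- The edges go between non-extremal vertices and are increasing pairs. -/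
def IsGraphOn {m : ℕ} (G : GraphOn m) : Prop :=
  ∀ e ∈ G, 0 < (e.1 : ℕ) ∧ e.1 < e.2 ∧ (e.2 : ℕ) < m + 1

/-- Adjacency relation of a graph. -/
def adj {m : ℕ} (G : GraphOn m) (a b : Fin (m + 2)) : Prop :=
  ∃ e ∈ G, (e.1 = a ∧ e.2 = b) ∨ (e.1 = b ∧ e.2 = a)

/-- `conn G a b` : `a` and `b` lie in the same connected component of `G`. -/
def conn {m : ℕ} (G : GraphOn m) : Fin (m + 2) → Fin (m + 2) → Prop :=
  Relation.ReflTransGen (adj G)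

/-- A vertex is discrete if no edge is incident with it. -/
def IsDiscrete {m : ℕ} (G : GraphOn m) (a : Fin (m + 2)) : Prop :=
  ∀ e ∈ G, e.1 ≠ a ∧ e.2 ≠ a

lemma adj_symm {m : ℕ} (G : GraphOn m) : Symmetric (adj G) := by
  rintro a b ⟨e, he, h⟩
  exact ⟨e, he, h.symm⟩

/-- Being in the same connected component is an equivalence relation. -/
def connSetoid {m : ℕ} (G : GraphOn m) : Setoid (Fin (m + 2)) where
  r := conn G
  iseqv := by
    refine ⟨fun _ => Relation.ReflTransGen.refl, ?_, fun h h' => h.trans h'⟩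
    intro x y h
    induction h with
    | refl => exact Relation.ReflTransGen.refl
    | tail _ hab ih => exact Relation.ReflTransGen.head (adj_symm G hab) ih

/-- The number of connected components of a graph (all `m+2` vertices included). -/
def ncomp {m : ℕ} (G : GraphOn m) : ℕ := Fintype.card (Quotient (connSetoid G))

/-- `e` is a bridge of `G` if removing it increases the number of connected components. -/
def IsBridge {m : ℕ} (G : GraphOn m) (e : Fin (m + 2) × Fin (m + 2)) : Prop :=
  e ∈ G ∧ ncomp G < ncomp (G.erase e)

/-! ### Condensed maps -/

/-- The convex hull of `{f_j(x) : j ∈ α}`. -/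
def hullPoints {d : ℕ} (P : IntervalPartition n) {X : Type*} (f : X → Vec n d) (x : X)
    (a : Fin (P.p + 2)) : Set (Rd d) :=
  convexHull ℝ {q | ∃ j : Fin n, P.toFun (elt n j) = a ∧ q = f x j}

/-- `a` is a base (of its connected component of `G`) for the map `f`. -/
def IsBase {d : ℕ} (P : IntervalPartition n) (G : GraphOn P.p) {X : Type*}
    (f : X → Vec n d) (a : Fin (P.p + 2)) : Prop :=
  (∀ x : X, ∀ b, conn G a b → ∀ i : Fin n, P.toFun (elt n i) = b →
      f x i ∈ hullPoints P f x a)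
  ∧ ∀ e ∈ G, conn G a e.1 → ¬(e.1 < a ∧ e.2 < a)

/-- A map `f : X → (ℝ^d)^n` is `G`-condensed: it is proper and each connected component
of `G` has a base. -/
def IsCondensed {d : ℕ} (P : IntervalPartition n) (G : GraphOn P.p) {X : Type*}
    [TopologicalSpace X] (f : X → Vec n d) : Prop :=
  IsProperMap f ∧ ∀ a : Fin (P.p + 2), ∃ b, conn G a b ∧ IsBase P G f b

/-- `⋂_{(α,β) ∈ E(G)} D_{αβ}`. -/
def interD (ρ ε : ℝ) (c : Fin (n + 2) → ℝ) (P : IntervalPartition n) (d : ℕ)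
    (G : GraphOn P.p) : Set (Vec P.p d) :=
  ⋂ e ∈ G, Dset ρ ε c P d e.1 e.2

/-- `U_G`. -/
def Uset (ρ ε : ℝ) (c : Fin (n + 2) → ℝ) (P : IntervalPartition n) (d : ℕ)
    (G : GraphOn P.p) : Set (Vec n d) :=
  (nuP ρ ε c P d)ᶜ ∪ (projP ρ c P) ⁻¹' (interD ρ ε c P d G)

/-- Product of the projections to the first coordinate. -/
def p1 {m d : ℕ} (y : Vec m d) : Fin m → ℝ := fun i => fst (y i)

/-- `U_G^1`. -/
def Uset1 (ρ ε : ℝ) (c : Fin (n + 2) → ℝ) (P : IntervalPartition n) (d : ℕ)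
    (G : GraphOn P.p) : Set (Vec n d) :=
  (p1 ⁻¹' (p1 '' nuP ρ ε c P d))ᶜ
    ∪ p1 ⁻¹' (p1 '' ((projP ρ c P) ⁻¹' (interD ρ ε c P d G)))

/-! ### Contractions and homotopies -/

/-- The translation vector `A_e(s)` of the `e`-contraction. -/
def Acontr {d : ℕ} (P : IntervalPartition n) (G : GraphOn P.p)
    (e : Fin (P.p + 2) × Fin (P.p + 2)) (s : ℝ) : Vec n d := WithLp.toLp 2 fun i =>
  if conn (G.erase e) (P.toFun (elt n i)) e.1 then s • vVec d
  else if conn (G.erase e) (P.toFun (elt n i)) e.2 then -(s • vVec d) else 0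

/-- The `e`-contraction `F(x,s) = f(x) + A_e(s)` of `f` for `G`. -/
def econtr {d : ℕ} (P : IntervalPartition n) (G : GraphOn P.p)
    (e : Fin (P.p + 2) × Fin (P.p + 2)) {X : Type*} (f : X → Vec n d) :
    X × ↥(Set.Ici (0 : ℝ)) → Vec n d :=
  fun q => f q.1 + Acontr P G e (q.2 : ℝ)

/-- The `(e,e')`-contraction `F(x,s₁,s₂) = f(x) + A_e(s₁) + A_{e'}(s₂)` of `f` for `G`. -/
def eecontr {d : ℕ} (P : IntervalPartition n) (G : GraphOn P.p)
    (e e' : Fin (P.p + 2) × Fin (P.p + 2)) {X : Type*} (f : X → Vec n d) :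
    X × ↥(Set.Ici (0 : ℝ)) × ↥(Set.Ici (0 : ℝ)) → Vec n d :=
  fun q => f q.1 + Acontr P G e (q.2.1 : ℝ) + Acontr P G e' (q.2.2 : ℝ)

/-- The `(i,σ)`-contraction of a map `F` (σ = ±1): add `σsu` to the `i`-th component and
`-σsu` to the `(i+1)`-th component. Components are numbered `1,…,m` (the `k`-th coordinate
of `Vec m d` is component number `k+1`). -/
def icontr {m d : ℕ} {Y : Type*} (F : Y → Vec m d) (i : ℕ) (σ : ℝ) :
    Y × ↥(Set.Ici (0 : ℝ)) → Vec m d :=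
  fun q => WithLp.toLp 2 fun k => F q.1 k +
    (if (k : ℕ) + 1 = i then σ * (q.2 : ℝ)
     else if (k : ℕ) + 1 = i + 1 then -(σ * (q.2 : ℝ)) else 0) • uVec d

/-- The straight homotopy from `f` to `g`. -/
def straightH {V : Type*} [AddCommGroup V] [Module ℝ V] {Y : Type*} (f g : Y → V) :
    Y × ↥(Set.Icc (0 : ℝ) 1) → V :=
  fun q => (1 - (q.2 : ℝ)) • f q.1 + (q.2 : ℝ) • g q.1

/-! ### Merging pieces (the face operations δ) -/

/-- Value of the vertex map merging the pieces (0-based) `k` and `k+1`. -/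
def vmapVal (m k : ℕ) (a : ℕ) : ℕ :=
  if m = 0 then a else min (if a ≤ k then a else a - 1) m

/-- The vertex map of the merge, `Fin (m+2) → Fin (m-1+2)`. -/
def vmapFin (m k : ℕ) (a : Fin (m + 2)) : Fin (m - 1 + 2) :=
  ⟨vmapVal m k (a : ℕ), by have := a.isLt; unfold vmapVal; split <;> omega⟩

/-- The partition `δ_kP` obtained from `P` by uniting its `(k+1)`-th and `(k+2)`-th pieces
(i.e. the pieces of 0-based indices `k` and `k+1`). -/
def deltaPart (P : IntervalPartition n) (k : ℕ) : IntervalPartition n where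
  p := P.p - 1
  toFun := fun i => vmapFin P.p k (P.toFun i)
  mono := by
    intro a b hab
    have h2 : (P.toFun a : ℕ) ≤ (P.toFun b : ℕ) := P.mono hab
    simp only [vmapFin, Fin.mk_le_mk, vmapVal]
    split_ifs <;> omega
  surj := by
    intro b
    have hb := b.isLt
    by_cases h0 : P.p = 0
    · obtain ⟨i, hi⟩ := P.surj ⟨(b : ℕ), by omega⟩
      refine ⟨i, Fin.ext ?_⟩
      simp only [vmapFin, vmapVal, hi, h0, if_true]
    · rcases le_or_gt (b : ℕ) k with hbk | hbk
      · obtain ⟨i, hi⟩ := P.surj ⟨(b : ℕ), by omega⟩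
        refine ⟨i, Fin.ext ?_⟩
        simp only [vmapFin, vmapVal, hi, h0, if_false]
        split_ifs <;> omega
      · obtain ⟨i, hi⟩ := P.surj ⟨(b : ℕ) + 1, by omega⟩
        refine ⟨i, Fin.ext ?_⟩
        simp only [vmapFin, vmapVal, hi, h0, if_false]
        split_ifs <;> omega

/-- For a refinement pair (`Q` refines `P`): the piece of `P` containing a given piece of
`Q`. -/
def pieceMap (Q P : IntervalPartition n) : Fin (Q.p + 2) → Fin (P.p + 2) :=
  fun b => P.toFun (minElt Q b)

/-- The image graph on a coarser partition (e.g. `δ_iG` on `δ_iQ`). -/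
def pushGraph (Q P : IntervalPartition n) (G : GraphOn Q.p) : GraphOn P.p :=
  G.image fun e => (pieceMap Q P e.1, pieceMap Q P e.2)

/-- The image graph is an honest graph: no loops nor double edges are created
(injectivity of the edge map) and no edge is incident with an extremal piece. -/
def GoodPush (Q P : IntervalPartition n) (G : GraphOn Q.p) : Prop :=
  Set.InjOn (fun e : Fin (Q.p + 2) × Fin (Q.p + 2) => (pieceMap Q P e.1, pieceMap Q P e.2)) ↑G
  ∧ IsGraphOn (pushGraph Q P G)


section Aux1
variable {n : ℕ}

lemma epsP_pos {ε : ℝ} (hε : 0 < ε) (P : IntervalPartition n) : 0 < epsP ε P :=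
  div_pos hε (pow_pos (by norm_num) _)

lemma fst_zero' {d : ℕ} : fst (0 : Rd d) = 0 := by
  unfold fst; split_ifs <;> simp

lemma fst_add {d : ℕ} (a b : Rd d) : fst (a + b) = fst a + fst b := by
  unfold fst; split_ifs <;> simp

lemma fst_sub {d : ℕ} (a b : Rd d) : fst (a - b) = fst a - fst b := by
  unfold fst; split_ifs <;> simp

lemma fst_smul {d : ℕ} (r : ℝ) (a : Rd d) : fst (r • a) = r * fst a := by
  unfold fst; split_ifs <;> simp

lemma fst_sum {d : ℕ} {ι : Type*} (s : Finset ι) (g : ι → Rd d) :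
    fst (∑ i ∈ s, g i) = ∑ i ∈ s, fst (g i) := by
  induction s using Finset.cons_induction with
  | empty => simp [fst_zero']
  | cons a s ha ih => rw [Finset.sum_cons, Finset.sum_cons, fst_add, ih]

lemma fst_uVec {d : ℕ} (hd : 0 < d) : fst (uVec d) = 1 := by
  unfold fst uVec
  rw [dif_pos hd, dif_pos hd]
  simp [EuclideanSpace.single_apply]

lemma sq_fst_le {d : ℕ} (v : Rd d) : fst v ^ 2 ≤ ‖v‖ ^ 2 := by
  unfold fst; split_ifs with h
  · rw [PiLp.norm_sq_eq_of_L2]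
    calc v ⟨0, h⟩ ^ 2 = ‖v ⟨0, h⟩‖ ^ 2 := by rw [Real.norm_eq_abs, sq_abs]
    _ ≤ _ := Finset.single_le_sum (f := fun j => ‖v j‖ ^ 2) (fun j _ => sq_nonneg _)
        (Finset.mem_univ (⟨0, h⟩ : Fin d))
  · simpa using sq_nonneg ‖v‖

lemma abs_le_of_sq_le_sq' {a b : ℝ} (h : a ^ 2 ≤ b ^ 2) (hb : 0 ≤ b) : |a| ≤ b := by
  nlinarith [abs_nonneg a, sq_abs a]

lemma cs_avg {ι : Type*} (s : Finset ι) {k : ι} (hk : k ∈ s) (F : ι → ℝ) {B : ℝ}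
    (hB : 0 ≤ B) (hT : ∑ i ∈ s, F i ^ 2 ≤ B ^ 2) :
    |F k - (s.card : ℝ)⁻¹ * ∑ i ∈ s, F i| ≤ B := by
  classical
  have hm : 0 < s.card := Finset.card_pos.2 ⟨k, hk⟩
  set m : ℝ := (s.card : ℝ) with hmdef
  have hm0 : (1:ℝ) ≤ m := by rw [hmdef]; exact Nat.one_le_cast.mpr hm
  have hCS := Finset.sum_mul_sq_le_sq_mul_sq s (fun i => if i = k then m - 1 else -1) F
  have hw : ∑ i ∈ s, (if i = k then m - 1 else -1 : ℝ) ^ 2 = m * (m - 1) := by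
    rw [← Finset.add_sum_erase _ _ hk, if_pos rfl]
    have : ∀ i ∈ s.erase k, (if i = k then m - 1 else -1 : ℝ) ^ 2 = 1 := by
      intro i hi
      rw [if_neg (Finset.ne_of_mem_erase hi)]; norm_num
    rw [Finset.sum_congr rfl this, Finset.sum_const, Finset.card_erase_of_mem hk]
    have : ((s.card - 1 : ℕ) : ℝ) = m - 1 := by
      rw [hmdef]; push_cast [Nat.cast_sub hm]; ring
    rw [nsmul_eq_mul, this]; ring
  have hwf : ∑ i ∈ s, (if i = k then m - 1 else -1 : ℝ) * F i = m * F k - ∑ i ∈ s, F i := by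
    rw [← Finset.add_sum_erase _ _ hk, if_pos rfl]
    have : ∀ i ∈ s.erase k, (if i = k then m - 1 else -1 : ℝ) * F i = - F i := by
      intro i hi; rw [if_neg (Finset.ne_of_mem_erase hi)]; ring
    rw [Finset.sum_congr rfl this, Finset.sum_neg_distrib]
    rw [← Finset.add_sum_erase _ F hk]
    ring
  rw [hwf, hw] at hCS
  apply abs_le_of_sq_le_sq' _ hB
  have hmne : m ≠ 0 := by positivity
  have key : (m * F k - ∑ i ∈ s, F i) ^ 2 ≤ m ^ 2 * B ^ 2 := by
    calc (m * F k - ∑ i ∈ s, F i) ^ 2 ≤ m * (m - 1) * ∑ i ∈ s, F i ^ 2 := hCS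
    _ ≤ m ^ 2 * B ^ 2 := by nlinarith [Finset.sum_nonneg (fun i (_ : i ∈ s) => sq_nonneg (F i))]
  have : (F k - m⁻¹ * ∑ i ∈ s, F i) ^ 2 = (m * F k - ∑ i ∈ s, F i) ^ 2 / m ^ 2 := by
    field_simp
  rw [this]
  rw [div_le_iff₀ (by positivity)]
  linarith [key]

end Aux1

section Aux2
variable {n : ℕ}

lemma fiber_finest (j : Fin (n + 2)) : fiber (finest n) j = {j} := by
  ext i
  unfold fiber finest
  simp

lemma cPiece_finest (c : Fin (n + 2) → ℝ) (j : Fin (n + 2)) :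
    cPiece c (finest n) j = c j := by
  exact (congrArg (fun s => ∑ i ∈ s, c i) (fiber_finest j)).trans (Finset.sum_singleton _ _)

lemma minElt_finest (j : Fin (n + 2)) : minElt (finest n) j = j := by
  unfold minElt
  have h := fiber_finest (n := n) j
  have hm : j ∈ fiber (finest n) j := h ▸ Finset.mem_singleton_self j
  exact le_antisymm (Finset.min'_le _ _ hm)
    (Finset.le_min' _ _ _ (fun y hy => le_of_eq (Finset.mem_singleton.1 (h ▸ hy)).symm))

lemma toFun_zero (P : IntervalPartition n) : P.toFun 0 = 0 := by
  obtain ⟨i, hi⟩ := P.surj 0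
  exact le_antisymm (hi ▸ P.mono (Fin.zero_le i)) (Fin.zero_le _)

lemma toFun_last (P : IntervalPartition n) : P.toFun (Fin.last (n + 1)) = Fin.last (P.p + 1) := by
  obtain ⟨i, hi⟩ := P.surj (Fin.last (P.p + 1))
  exact le_antisymm (Fin.le_last _) (hi ▸ P.mono (Fin.le_last i))

lemma cLE_add_cGE (c : Fin (n + 2) → ℝ) (hsum : ∑ i, c i = 1) (P : IntervalPartition n)
    (a : Fin (P.p + 2)) : cLE c P a + cGE c P a = 1 := by
  have e1 := Finset.sum_filter_add_sum_filter_not Finset.univ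
    (fun i : Fin (n + 2) => P.toFun i < a) c
  have e2 := Finset.sum_filter_add_sum_filter_not
    (Finset.univ.filter fun i : Fin (n + 2) => ¬ P.toFun i < a)
    (fun i : Fin (n + 2) => P.toFun i = a) c
  have e3 : ∑ i ∈ (Finset.univ.filter fun i : Fin (n + 2) => ¬ P.toFun i < a).filter
      (fun i => P.toFun i = a), c i = cPiece c P a := by
    refine Finset.sum_congr ?_ (fun _ _ => rfl)
    ext i
    simp only [Finset.mem_filter, Finset.mem_univ, true_and, fiber, cPiece]
    constructor
    · rintro ⟨_, h⟩; exact h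
    · intro h; exact ⟨by rw [h]; exact lt_irrefl a, h⟩
  have e4 : ∑ i ∈ (Finset.univ.filter fun i : Fin (n + 2) => ¬ P.toFun i < a).filter
      (fun i => ¬ P.toFun i = a), c i
      = ∑ i ∈ Finset.univ.filter (fun i : Fin (n + 2) => a < P.toFun i), c i := by
    refine Finset.sum_congr ?_ (fun _ _ => rfl)
    ext i
    simp only [Finset.mem_filter, Finset.mem_univ, true_and]
    constructor
    · rintro ⟨h1, h2⟩; exact lt_of_le_of_ne (le_of_not_gt h1) (Ne.symm h2)
    · intro h; exact ⟨not_lt.2 (le_of_lt h), (ne_of_gt h)⟩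
  rw [e3, e4] at e2
  rw [hsum] at e1
  unfold cLE cGE
  linarith [e1, e2]

lemma cLE_zero (c : Fin (n + 2) → ℝ) (P : IntervalPartition n) :
    cLE c P 0 = cPiece c P 0 / 2 := by
  unfold cLE
  have h : (Finset.univ.filter fun i : Fin (n + 2) => P.toFun i < (0 : Fin (P.p + 2))) = ∅ := by
    apply Finset.filter_eq_empty_iff.2
    intro i _
    exact Fin.not_lt_zero _
  rw [h, Finset.sum_empty, zero_add]

lemma cGE_last (c : Fin (n + 2) → ℝ) (P : IntervalPartition n) :
    cGE c P (Fin.last (P.p + 1)) = cPiece c P (Fin.last (P.p + 1)) / 2 := by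
  unfold cGE
  have h : (Finset.univ.filter fun i : Fin (n + 2) =>
      Fin.last (P.p + 1) < P.toFun i) = ∅ := by
    apply Finset.filter_eq_empty_iff.2
    intro i _
    exact not_lt.2 (Fin.le_last _)
  rw [h, Finset.sum_empty, zero_add]

lemma offset_eq (ρ : ℝ) (c : Fin (n + 2) → ℝ) (P : IntervalPartition n) (K : Fin (n + 2)) :
    offsetQ ρ c P (finest n) K = ρ * (cLE c (finest n) K - cLE c P (P.toFun K)) := by
  unfold offsetQ cLE
  have hfK : (finest n).toFun K = K := rfl
  erw [cPiece_finest, hfK]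
  have hsplit : ∑ i ∈ Finset.univ.filter (fun i : Fin (n + 2) =>
        (finest n).toFun i < K), c i
      = (∑ i ∈ Finset.univ.filter (fun i : Fin (n + 2) => P.toFun i < P.toFun K), c i)
        + ∑ i ∈ Finset.univ.filter (fun i : Fin (n + 2) =>
            P.toFun i = P.toFun K ∧ (finest n).toFun i < K), c i := by
    rw [← Finset.sum_filter_add_sum_filter_not (Finset.univ.filter (fun i : Fin (n + 2) =>
        (finest n).toFun i < K)) (fun i => P.toFun i < P.toFun K) c]
    congr 1
    · refine Finset.sum_congr ?_ (fun _ _ => rfl)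
      ext i
      unfold finest
      simp only [Finset.mem_filter, Finset.mem_univ, true_and, finest, id_eq]
      constructor
      · rintro ⟨_, h⟩; exact h
      · intro h
        refine ⟨?_, h⟩
        by_contra hK
        exact absurd (P.mono (le_of_not_gt hK)) (not_le.2 h)
    · refine Finset.sum_congr ?_ (fun _ _ => rfl)
      ext i
      unfold finest
      simp only [Finset.mem_filter, Finset.mem_univ, true_and, finest, id_eq]
      constructor
      · rintro ⟨h1, h2⟩
        exact ⟨le_antisymm (P.mono (le_of_lt h1)) (le_of_not_gt h2), h1⟩
      · rintro ⟨h1, h2⟩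
        refine ⟨h2, ?_⟩
        rw [h1]; exact lt_irrefl _
  unfold finest at hsplit ⊢
  simp only [Finset.filter_congr_decidable] at hsplit ⊢
  linear_combination (norm := ring1!) (-ρ) * hsplit

lemma cLE_sub_finest (c : Fin (n + 2) → ℝ) {i j : Fin (n + 2)} (hij : i < j) :
    cLE c (finest n) j - cLE c (finest n) i = cBetween c (finest n) i j := by
  unfold cLE cBetween
  rw [cPiece_finest, cPiece_finest]
  have hsplit : ∑ k ∈ Finset.univ.filter (fun k : Fin (n + 2) =>
        (finest n).toFun k < j), c k
      = (∑ k ∈ Finset.univ.filter (fun k : Fin (n + 2) => (finest n).toFun k < i), c k)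
        + (c i + ∑ k ∈ Finset.univ.filter (fun k : Fin (n + 2) =>
            i < (finest n).toFun k ∧ (finest n).toFun k < j), c k) := by
    rw [← Finset.sum_filter_add_sum_filter_not (Finset.univ.filter (fun k : Fin (n + 2) =>
        (finest n).toFun k < j)) (fun k => (finest n).toFun k < i) c]
    congr 1
    · refine Finset.sum_congr ?_ (fun _ _ => rfl)
      ext k
      unfold finest
      simp only [Finset.mem_filter, Finset.mem_univ, true_and, finest, id_eq]
      constructor
      · rintro ⟨_, h⟩; exact h
      · intro h; exact ⟨lt_trans h hij, h⟩
    · have hins : (Finset.univ.filter (fun k : Fin (n + 2) =>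
            (finest n).toFun k < j)).filter (fun k => ¬ (finest n).toFun k < i)
          = insert i (Finset.univ.filter (fun k : Fin (n + 2) =>
            i < (finest n).toFun k ∧ (finest n).toFun k < j)) := by
        ext k
        unfold finest
        simp only [Finset.mem_filter, Finset.mem_univ, true_and, Finset.mem_insert,
          finest, id_eq, Fin.lt_def, Fin.ext_iff, not_lt, Fin.le_def]
        have := hij
        rw [Fin.lt_def] at this
        omega
      rw [hins, Finset.sum_insert]
      unfold finest
      simp only [Finset.mem_filter, Finset.mem_univ, true_and, finest, id_eq]
      rintro ⟨h1, _⟩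
      exact absurd h1 (lt_irrefl i)
  unfold finest at hsplit ⊢
  simp only [Finset.filter_congr_decidable] at hsplit ⊢
  linear_combination (norm := ring1!) hsplit

end Aux2

lemma ePt_apply (ρ : ℝ) (c : Fin (n + 2) → ℝ) (P : IntervalPartition n) {d : ℕ}
    (x : Vec P.p d) (k : Fin n) :
    ePt ρ c P x k = extTuple ρ c P x (P.toFun (elt n k))
      + offsetQ ρ c P (finest n) (elt n k) • uVec d := by
  unfold ePt eMap
  exact congrArg (fun j => extTuple ρ c P x (P.toFun j) + offsetQ ρ c P (finest n) j • uVec d)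
    (minElt_finest (elt n k))


/-- first-coordinate estimates for points of `ν_P ∖ π_P⁻¹(E_P)`.  Here
`yext` extends the components `y₁,…,y_n` by `y₀ = (-1+ρc₀/2)u` and
`y_{n+1} = (1-ρc_{n+1}/2)u`, and the quantities `c_{≤{k}}`, `c_{≥{k}}`, `c_{{i}{j}}` are
taken with respect to the finest partition (singleton pieces). -/
theorem statement_11
    (n d : ℕ) (hn : 1 ≤ n) (hd : 1 ≤ d) (ρ ε : ℝ) (c : Fin (n + 2) → ℝ)
    (hρ0 : 0 < ρ) (hρ1 : ρ < 1) (hε0 : 0 < ε) (hc : ∀ i, 0 < c i)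
    (hsum : ∑ i, c i = 1) (hc0 : 100 * ε / ρ < c 0)
    (hci : ∀ i : Fin (n + 2), 1 ≤ (i : ℕ) →
      100 * (ε / ρ + ∑ j ∈ Finset.univ.filter (fun j : Fin (n + 2) => (j : ℕ) < (i : ℕ)), c j)
        < c i)
    (P : IntervalPartition n) (y : Vec n d)
    (hy : y ∈ nuP ρ ε c P d) (hyE : projP ρ c P y ∉ EsetP ρ ε c P d)
    (yext : Fin (n + 2) → Rd d)
    (hyext : yext = fun i : Fin (n + 2) =>
      if _h0 : (i : ℕ) = 0 then (-1 + ρ * c 0 / 2) • uVec d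
      else if _h1 : (i : ℕ) = n + 1 then
        (1 - ρ * c (Fin.last (n + 1)) / 2) • uVec d
      else y ⟨(i : ℕ) - 1, by have := i.isLt; omega⟩) :
    (∀ k : Fin n,
      -1 + ρ * cLE c (finest n) (elt n k) - 2 * epsP ε P < fst (y k) ∧
      fst (y k) < 1 - ρ * cGE c (finest n) (elt n k) + 2 * epsP ε P) ∧
    (∀ i j : Fin (n + 2), P.toFun i = P.toFun j → i < j →
      ρ * cBetween c (finest n) i j - 2 * epsP ε P < fst (yext j) - fst (yext i) ∧
      fst (yext j) - fst (yext i) < ρ * cBetween c (finest n) i j + 2 * epsP ε P) := by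
  have hd0 : 0 < d := hd
  have heP : 0 < epsP ε P := epsP_pos hε0 P
  simp only [nuP, Set.mem_setOf_eq] at hy
  obtain ⟨x, hx⟩ := hy
  have hB0 : (0:ℝ) ≤ ‖y - ePt ρ c P x‖ := norm_nonneg _
  set F : Fin n → ℝ := fun i => fst (y i) - fst (ePt ρ c P x i) with hFdef
  have hTuniv : ∑ i : Fin n, F i ^ 2 ≤ ‖y - ePt ρ c P x‖ ^ 2 := by
    rw [PiLp.norm_sq_eq_of_L2]
    apply Finset.sum_le_sum
    intro i _
    have hFi : F i = fst ((y - ePt ρ c P x) i) := by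
      simp only [hFdef]
      rw [PiLp.sub_apply, fst_sub]
    rw [hFi]
    exact sq_fst_le _
  have hTs : ∀ s : Finset (Fin n), ∑ i ∈ s, F i ^ 2 ≤ ‖y - ePt ρ c P x‖ ^ 2 :=
    fun s => le_trans (Finset.sum_le_sum_of_subset_of_nonneg (Finset.subset_univ s)
      (fun _ _ _ => sq_nonneg _)) hTuniv
  have hFk : ∀ k, |F k| < epsP ε P := by
    intro k
    have h1 : F k ^ 2 ≤ ‖y - ePt ρ c P x‖ ^ 2 :=
      le_trans (Finset.single_le_sum (fun j _ => sq_nonneg (F j)) (Finset.mem_univ k)) hTuniv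
    exact lt_of_le_of_lt (abs_le_of_sq_le_sq' h1 hB0) hx
  have hyk : ∀ k : Fin n, fst (y k)
      = fst (extTuple ρ c P x (P.toFun (elt n k)))
        + offsetQ ρ c P (finest n) (elt n k) + F k := by
    intro k
    have hFk' : F k = fst (y k) - fst (ePt ρ c P x k) := rfl
    rw [ePt_apply, fst_add, fst_smul, fst_uVec hd0] at hFk'
    linarith [hFk']
  have hpart1 : ∀ k : Fin n,
      -1 + ρ * cLE c (finest n) (elt n k) - 2 * epsP ε P < fst (y k) ∧
      fst (y k) < 1 - ρ * cGE c (finest n) (elt n k) + 2 * epsP ε P := by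
    intro k
    have hyk' := hyk k
    rw [offset_eq ρ c P (elt n k)] at hyk'
    obtain ⟨w, hwdef⟩ : ∃ w, w = P.toFun (elt n k) := ⟨_, rfl⟩
    rw [← hwdef] at hyk'
    have hfin1 : cLE c (finest n) (elt n k) + cGE c (finest n) (elt n k) = 1 :=
      cLE_add_cGE c hsum (finest n) (elt n k)
    have hfin1' : ρ * cLE c (finest n) (elt n k) + ρ * cGE c (finest n) (elt n k) = ρ := by
      linear_combination ρ * hfin1
    have hPsum : cLE c P w + cGE c P w = 1 := cLE_add_cGE c hsum P w
    have hPsum' : ρ * cLE c P w + ρ * cGE c P w = ρ := by linear_combination ρ * hPsum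
    have hFk' := abs_lt.1 (hFk k)
    by_cases hw0 : (w : ℕ) = 0
    · have hw00 : w = 0 := Fin.ext (by simpa using hw0)
      have hext : extTuple ρ c P x w = (-1 + ρ * cPiece c P 0 / 2) • uVec d := by
        unfold extTuple; rw [dif_pos hw0]
      have hcLE0 : cLE c P w = cPiece c P 0 / 2 := by rw [hw00]; exact cLE_zero c P
      rw [hext, fst_smul, fst_uVec hd0, hcLE0] at hyk'
      have hclean : fst (y k) = -1 + ρ * cLE c (finest n) (elt n k) + F k := by
        linear_combination hyk'
      constructor
      · linarith [hclean, hFk'.1, heP]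
      · linarith [hclean, hFk'.2, heP, hρ1, hfin1']
    · by_cases hwl : (w : ℕ) = P.p + 1
      · have hwlast : w = Fin.last (P.p + 1) := Fin.ext (by rw [Fin.val_last]; exact hwl)
        have hext : extTuple ρ c P x w
            = (1 - ρ * cPiece c P (Fin.last (P.p + 1)) / 2) • uVec d := by
          unfold extTuple; rw [dif_neg hw0, dif_pos hwl]
        have hcGEl : cGE c P w = cPiece c P (Fin.last (P.p + 1)) / 2 := by
          rw [hwlast]; exact cGE_last c P
        rw [hext, fst_smul, fst_uVec hd0] at hyk'
        have hclean : fst (y k) = 1 - ρ + ρ * cLE c (finest n) (elt n k) + F k := by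
          linear_combination hyk' - ρ * hPsum + ρ * hcGEl
        constructor
        · linarith [hclean, hFk'.1, heP, hρ1]
        · linarith [hclean, hFk'.2, heP, hfin1']
      · have hw0' : 0 < (w : ℕ) := Nat.pos_of_ne_zero hw0
        have hw1 : (w : ℕ) < P.p + 1 := by have := w.isLt; omega
        have hEw : projP ρ c P y ∉ Eset ρ ε c P d w := fun hmem =>
          hyE (Set.mem_biUnion (⟨hw0', hw1⟩ :
            w ∈ {a : Fin (P.p + 2) | 0 < (a : ℕ) ∧ (a : ℕ) < P.p + 1}) hmem)
        simp only [Eset, Set.mem_setOf_eq, not_or, not_le] at hEw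
        obtain ⟨-, hE2, hE3⟩ := hEw
        have hel : elt P.p ⟨(w : ℕ) - 1, by omega⟩ = w := by
          apply Fin.ext; simp only [elt]; omega
        have hcompz : comp (projP ρ c P y) w
            = ((Finset.univ.filter fun i : Fin n => P.toFun (elt n i) = w).card : ℝ)⁻¹ •
              ∑ i ∈ Finset.univ.filter fun i : Fin n => P.toFun (elt n i) = w,
                (y i - offsetQ ρ c P (finest n) (elt n i) • uVec d) := by
          unfold comp
          rw [dif_pos (⟨hw0', hw1⟩ : 0 < (w : ℕ) ∧ (w : ℕ) < P.p + 1)]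
          simp only [projP]
          rw [hel]
        have hkfib : k ∈ Finset.univ.filter (fun i : Fin n => P.toFun (elt n i) = w) := by
          simp only [Finset.mem_filter, Finset.mem_univ, true_and]
          exact hwdef.symm
        have hcard : (0:ℝ) <
            ((Finset.univ.filter fun i : Fin n => P.toFun (elt n i) = w).card : ℝ) := by
          exact_mod_cast Finset.card_pos.2 ⟨k, hkfib⟩
        have hfstz : fst (comp (projP ρ c P y) w)
            = fst (extTuple ρ c P x w)
              + ((Finset.univ.filter fun i : Fin n => P.toFun (elt n i) = w).card : ℝ)⁻¹
                * ∑ i ∈ Finset.univ.filter fun i : Fin n => P.toFun (elt n i) = w, F i := by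
          rw [hcompz, fst_smul, fst_sum]
          have hterm : ∀ i ∈ Finset.univ.filter (fun i : Fin n => P.toFun (elt n i) = w),
              fst (y i - offsetQ ρ c P (finest n) (elt n i) • uVec d)
                = fst (extTuple ρ c P x w) + F i := by
            intro i hi
            rw [Finset.mem_filter] at hi
            rw [fst_sub, fst_smul, fst_uVec hd0]
            have := hyk i
            rw [hi.2] at this
            rw [this]
            ring
          rw [Finset.sum_congr rfl hterm, Finset.sum_add_distrib, Finset.sum_const,
            nsmul_eq_mul]
          rw [mul_add, ← mul_assoc, inv_mul_cancel₀ hcard.ne', one_mul]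
        have herr := abs_lt.1 (lt_of_le_of_lt
          (cs_avg (Finset.univ.filter fun i : Fin n => P.toFun (elt n i) = w) hkfib F hB0
            (hTs _)) hx)
        have hclean : fst (y k) = fst (comp (projP ρ c P y) w)
            + ρ * (cLE c (finest n) (elt n k) - cLE c P w)
            + (F k - ((Finset.univ.filter fun i : Fin n => P.toFun (elt n i) = w).card : ℝ)⁻¹
                * ∑ i ∈ Finset.univ.filter fun i : Fin n => P.toFun (elt n i) = w, F i) := by
          linear_combination hyk' - hfstz
        constructor
        · linarith [hclean, hE2, herr.1, herr.2]
        · linarith [hclean, hE3, herr.1, herr.2, hPsum', hfin1']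
  refine ⟨hpart1, ?_⟩
  intro i j hPij hij
  have herrall : ∀ i : Fin (n + 2),
      |fst (yext i) - (fst (extTuple ρ c P x (P.toFun i))
        + offsetQ ρ c P (finest n) i)| < epsP ε P := by
    intro i
    rw [offset_eq ρ c P i]
    by_cases h0 : (i : ℕ) = 0
    · have hi0 : i = 0 := Fin.ext (by simpa using h0)
      have hy0 : fst (yext i) = -1 + ρ * c 0 / 2 := by
        rw [hyext]; simp only
        rw [dif_pos h0, fst_smul, fst_uVec hd0]; ring
      have hP0 : P.toFun i = 0 := by rw [hi0]; exact toFun_zero P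
      have hext : fst (extTuple ρ c P x (P.toFun i)) = -1 + ρ * cPiece c P 0 / 2 := by
        rw [hP0]; unfold extTuple
        rw [dif_pos (by simp), fst_smul, fst_uVec hd0]; ring
      have e1 : cLE c (finest n) i = c 0 / 2 := by
        rw [hi0, show cLE c (finest n) (0 : Fin (n + 2))
            = cPiece c (finest n) 0 / 2 from cLE_zero c (finest n)]
        exact congrArg (· / 2) (cPiece_finest c 0)
      have e2 : cLE c P (P.toFun i) = cPiece c P 0 / 2 := by
        rw [hP0]; exact cLE_zero c P
      have hkey : fst (yext i) - (fst (extTuple ρ c P x (P.toFun i))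
          + ρ * (cLE c (finest n) i - cLE c P (P.toFun i))) = 0 := by
        rw [hy0, hext, e1, e2]; ring
      rw [hkey, abs_zero]; exact heP
    · by_cases h1 : (i : ℕ) = n + 1
      · have hil : i = Fin.last (n + 1) := Fin.ext (by rw [Fin.val_last]; exact h1)
        have hy1 : fst (yext i) = 1 - ρ * c (Fin.last (n + 1)) / 2 := by
          rw [hyext]; simp only
          rw [dif_neg h0, dif_pos h1, fst_smul, fst_uVec hd0]; ring
        have hPl : P.toFun i = Fin.last (P.p + 1) := by rw [hil]; exact toFun_last P
        have hext : fst (extTuple ρ c P x (P.toFun i))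
            = 1 - ρ * cPiece c P (Fin.last (P.p + 1)) / 2 := by
          rw [hPl]; unfold extTuple
          rw [dif_neg (by simp), dif_pos (by simp), fst_smul, fst_uVec hd0]; ring
        have hPsum : cLE c P (Fin.last (P.p + 1)) + cGE c P (Fin.last (P.p + 1)) = 1 :=
          cLE_add_cGE c hsum P _
        have hgl := cGE_last c P
        have hfsum : cLE c (finest n) i + cGE c (finest n) i = 1 :=
          cLE_add_cGE c hsum (finest n) i
        have hgfin : cGE c (finest n) i = c (Fin.last (n + 1)) / 2 := by
          rw [hil, show cGE c (finest n) (Fin.last (n + 1))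
              = cPiece c (finest n) (Fin.last (n + 1)) / 2 from cGE_last c (finest n),
            cPiece_finest]
        have e1 : cLE c (finest n) i = 1 - c (Fin.last (n + 1)) / 2 := by
          linarith [hfsum, hgfin]
        have e2 : cLE c P (Fin.last (P.p + 1))
            = 1 - cPiece c P (Fin.last (P.p + 1)) / 2 := by linarith [hPsum, hgl]
        have hkey : fst (yext i) - (fst (extTuple ρ c P x (P.toFun i))
            + ρ * (cLE c (finest n) i - cLE c P (P.toFun i))) = 0 := by
          rw [hy1, hext, hPl, e1, e2]; ring
        rw [hkey, abs_zero]; exact heP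
      · have hn1 : (i : ℕ) - 1 < n := by have := i.isLt; omega
        have hki : elt n ⟨(i : ℕ) - 1, hn1⟩ = i := by
          apply Fin.ext; simp only [elt]; omega
        have hyi : fst (yext i) = fst (y ⟨(i : ℕ) - 1, hn1⟩) := by
          rw [hyext]; simp only
          rw [dif_neg h0, dif_neg h1]
        have hyk'' := hyk ⟨(i : ℕ) - 1, hn1⟩
        rw [hki, offset_eq ρ c P i] at hyk''
        rw [hyi, hyk'']
        simpa using hFk ⟨(i : ℕ) - 1, hn1⟩
  have h1 := abs_lt.1 (herrall i)
  have h2 := abs_lt.1 (herrall j)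
  rw [hPij] at h1
  have hoffij : offsetQ ρ c P (finest n) j - offsetQ ρ c P (finest n) i
      = ρ * cBetween c (finest n) i j := by
    rw [offset_eq, offset_eq, hPij]
    linear_combination ρ * cLE_sub_finest c hij
  constructor
  · linarith [h1.1, h1.2, h2.1, h2.2, hoffij]
  · linarith [h1.1, h1.2, h2.1, h2.2, hoffij]


end SinhaKnots
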